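/- arXiv:2110.09373 — 3 statements merged into one kernel-verified Lean document; each statement's English description precedes it below -/
import Mathlib

section
/- For integers k ≥ 2 and 0 ≤ i < r with r ≥ k, we have i·(C(r-1,k-1) + C(r-2,k-2)) ≥ r·C(i,k-1). -/
/-- For integers `k ≥ 2` and `0 ≤ i < r` with `r ≥ k`, we have
`i·(C(r-1,k-1) + C(r-2,k-2)) ≥ r·C(i,k-1)`. -/
theorem stmt_1 (k r i : ℕ) (hk : 2 ≤ k) (hkr : k ≤ r) (hi : i < r) :
    r * Nat.choose i (k - 1) ≤
      i * (Nat.choose (r - 1) (k - 1) + Nat.choose (r - 2) (k - 2)) := by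
  obtain ⟨m, rfl⟩ : ∃ m, k = m + 2 := ⟨k - 2, by omega⟩
  rcases Nat.eq_zero_or_pos i with rfl | hi0
  · simp
  obtain ⟨i', rfl⟩ : ∃ i', i = i' + 1 := ⟨i - 1, by omega⟩
  obtain ⟨r', rfl⟩ : ∃ r', r = r' + 2 := ⟨r - 2, by omega⟩
  simp only [Nat.add_sub_cancel, show m + 2 - 1 = m + 1 from rfl,
    show m + 2 - 2 = m from rfl, show r' + 2 - 1 = r' + 1 from rfl,
    show r' + 2 - 2 = r' from rfl]
  have h1 : (i' + 1) * Nat.choose i' m = Nat.choose (i' + 1) (m + 1) * (m + 1) :=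
    Nat.add_one_mul_choose_eq i' m
  have h2 : (r' + 1) * Nat.choose r' m = Nat.choose (r' + 1) (m + 1) * (m + 1) :=
    Nat.add_one_mul_choose_eq r' m
  have h3 : Nat.choose i' m ≤ Nat.choose r' m := Nat.choose_le_choose m (by omega)
  have key : (r' + 2) * Nat.choose (i' + 1) (m + 1) * (m + 1) ≤
      (i' + 1) * (Nat.choose (r' + 1) (m + 1) + Nat.choose r' m) * (m + 1) := by
    calc (r' + 2) * Nat.choose (i' + 1) (m + 1) * (m + 1)
        = (r' + 2) * ((i' + 1) * Nat.choose i' m) := by rw [h1]; ring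
      _ ≤ (i' + 1) * ((r' + 2 + m) * Nat.choose r' m) := by
          rw [show (r'+2)*((i'+1)*Nat.choose i' m) = (i'+1)*((r'+2)*Nat.choose i' m) by ring]
          exact Nat.mul_le_mul_left _ (Nat.mul_le_mul (by omega) h3)
      _ = (i' + 1) * ((r' + 1) * Nat.choose r' m + (m + 1) * Nat.choose r' m) := by ring
      _ = (i' + 1) * (Nat.choose (r' + 1) (m + 1) + Nat.choose r' m) * (m + 1) := by
          rw [h2]; ring
  exact Nat.le_of_mul_le_mul_right key (Nat.succ_pos m)
end

section
/- Let j ≥ k ≥ 2, α > 0, and let H be a k-graph on n ≥ (j+1)²/α vertices with minimum codegree δ(H) ≥ (1 - f_k(j+1) + α)·n, where f_k(j+1) = 1/(C(j,k-1) + C(j-1,k-2)). Then for any two j-cliques C₁, C₂ of H with |C₁ ∩ C₂| = j - 1, there are at least α·n vertices v such that both C₁ ∪ {v} and C₂ ∪ {v} are (j+1)-cliques of H. -/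
open Finset
open scoped Classical

/-- `S` spans a clique in the `k`-graph with edge set `H`. -/
def HIsClique {V : Type*} (H : Finset (Finset V)) (k : ℕ) (S : Finset V) : Prop :=
  ∀ e : Finset V, e ⊆ S → e.card = k → e ∈ H

/-- Let `j ≥ k ≥ 2`, `α > 0`, and let `H` be a `k`-graph on `n ≥ (j+1)²/α` vertices
with minimum codegree `δ(H) ≥ (1 - f_k(j+1) + α)·n`.  Then for any two `j`-cliques
`C₁, C₂` of `H` with `|C₁ ∩ C₂| = j - 1`, there are at least `α·n` vertices `v`
such that both `C₁ ∪ {v}` and `C₂ ∪ {v}` are `(j+1)`-cliques of `H`. -/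
theorem stmt_4 {V : Type*} [Fintype V] [DecidableEq V] (k j n : ℕ) (α : ℝ)
    (hk : 2 ≤ k) (hkj : k ≤ j) (hα : 0 < α) (hn : Fintype.card V = n)
    (hnbig : ((j + 1 : ℕ) ^ 2 : ℝ) / α ≤ (n : ℝ))
    (H : Finset (Finset V)) (huniform : ∀ e ∈ H, e.card = k)
    (hdeg : ∀ S : Finset V, S.card = k - 1 →
      (1 - 1 / ((Nat.choose j (k - 1) : ℝ) + (Nat.choose (j - 1) (k - 2) : ℝ)) + α) * n ≤
        ((H.filter (fun e => S ⊆ e)).card : ℝ))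
    (C₁ C₂ : Finset V) (h₁ : C₁.card = j) (h₂ : C₂.card = j)
    (hc₁ : HIsClique H k C₁) (hc₂ : HIsClique H k C₂) (hint : (C₁ ∩ C₂).card = j - 1) :
    α * n ≤ ((Finset.univ.filter (fun v => v ∉ C₁ ∧ v ∉ C₂ ∧
      HIsClique H k (insert v C₁) ∧ HIsClique H k (insert v C₂))).card : ℝ) := by
  classical
  set T : ℕ := Nat.choose j (k-1) + Nat.choose (j-1) (k-2) with hT
  have hT2 : 2 ≤ T := by
    have h1 : 0 < Nat.choose j (k-1) := Nat.choose_pos (by omega)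
    have h2 : 0 < Nat.choose (j-1) (k-2) := Nat.choose_pos (by omega)
    omega
  have hTR : ((Nat.choose j (k - 1) : ℝ) + (Nat.choose (j - 1) (k - 2) : ℝ)) = (T : ℝ) := by
    push_cast [hT]; ring
  have hTne : (T : ℝ) ≠ 0 := by positivity
  -- the family of (k-1)-subsets
  set 𝒮 : Finset (Finset V) := C₁.powersetCard (k-1) ∪ C₂.powersetCard (k-1) with h𝒮
  have hScard : 𝒮.card = T := by
    have hinter : C₁.powersetCard (k-1) ∩ C₂.powersetCard (k-1)
        = (C₁ ∩ C₂).powersetCard (k-1) := by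
      ext S
      simp only [Finset.mem_inter, Finset.mem_powersetCard, Finset.subset_inter_iff]
      tauto
    have hcu := Finset.card_union_add_card_inter (C₁.powersetCard (k-1)) (C₂.powersetCard (k-1))
    rw [hinter] at hcu
    simp only [Finset.card_powersetCard, h₁, h₂, hint] at hcu
    -- Pascal: choose j (k-1) = choose (j-1) (k-2) + choose (j-1) (k-1)
    have hpascal : Nat.choose j (k-1) = Nat.choose (j-1) (k-2) + Nat.choose (j-1) (k-1) := by
      have h := Nat.choose_succ_succ (j-1) (k-2)
      have hj : j - 1 + 1 = j := by omega
      have hk' : k - 2 + 1 = k - 1 := by omega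
      simp only [Nat.succ_eq_add_one] at h
      rw [hj, hk'] at h
      exact h
    rw [h𝒮]
    omega
  -- every member of 𝒮 has card k-1
  have hSmem : ∀ S ∈ 𝒮, S.card = k - 1 := by
    intro S hS
    rcases Finset.mem_union.1 hS with h | h <;>
      exact (Finset.mem_powersetCard.1 h).2
  -- key bound on bad vertices per S
  have key : ∀ S : Finset V, S.card = k - 1 →
      (((univ : Finset V).filter (fun v => insert v S ∉ H)).card : ℝ) ≤ (1/(T:ℝ) - α) * n := by
    intro S hS
    have hfil := hdeg S hS
    rw [hTR] at hfil
    have hsub : H.filter (fun e => S ⊆ e) ⊆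
        ((univ : Finset V).filter (fun v => insert v S ∈ H)).image (fun v => insert v S) := by
      intro e he
      rw [Finset.mem_filter] at he
      obtain ⟨heH, hSe⟩ := he
      have hecard : e.card = k := huniform e heH
      have h1 : (e \ S).card = 1 := by
        rw [Finset.card_sdiff_of_subset hSe, hecard, hS]; omega
      obtain ⟨v, hv⟩ := Finset.card_eq_one.1 h1
      have hev : e = insert v S := by
        have := Finset.sdiff_union_of_subset hSe
        rw [hv] at this
        rw [← this, Finset.insert_eq]
      rw [Finset.mem_image]
      exact ⟨v, Finset.mem_filter.2 ⟨Finset.mem_univ v, hev ▸ heH⟩, hev.symm⟩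
    have h2 : ((H.filter (fun e => S ⊆ e)).card : ℝ) ≤
        (((univ : Finset V).filter (fun v => insert v S ∈ H)).card : ℝ) := by
      exact_mod_cast (Finset.card_le_card hsub).trans (Finset.card_image_le)
    have h3 : ((univ : Finset V).filter (fun v => insert v S ∈ H)).card
        + ((univ : Finset V).filter (fun v => insert v S ∉ H)).card = n := by
      rw [Finset.card_filter_add_card_filter_not, Finset.card_univ, hn]
    have h3' : (((univ : Finset V).filter (fun v => insert v S ∈ H)).card : ℝ)
        + (((univ : Finset V).filter (fun v => insert v S ∉ H)).card : ℝ) = n := by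
      exact_mod_cast h3
    linarith
  -- the bad set
  set Bad : Finset V := (C₁ ∪ C₂) ∪ 𝒮.biUnion (fun S => (univ : Finset V).filter
      (fun v => insert v S ∉ H)) with hBadDef
  have hU : (C₁ ∪ C₂).card = j + 1 := by
    have := Finset.card_union_add_card_inter C₁ C₂
    omega
  have hBadcard : (Bad.card : ℝ) ≤ (j+1 : ℝ) + ((n : ℝ) - (T:ℝ) * α * n) := by
    have hb1 : Bad.card ≤ (C₁ ∪ C₂).card + (𝒮.biUnion (fun S => (univ : Finset V).filter
        (fun v => insert v S ∉ H))).card := Finset.card_union_le _ _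
    have hb2 : (𝒮.biUnion (fun S => (univ : Finset V).filter
        (fun v => insert v S ∉ H))).card ≤ ∑ S ∈ 𝒮, ((univ : Finset V).filter
        (fun v => insert v S ∉ H)).card := Finset.card_biUnion_le
    have hb3 : (∑ S ∈ 𝒮, (((univ : Finset V).filter (fun v => insert v S ∉ H)).card : ℝ))
        ≤ (T : ℝ) * ((1/(T:ℝ) - α) * n) := by
      calc (∑ S ∈ 𝒮, (((univ : Finset V).filter (fun v => insert v S ∉ H)).card : ℝ))
          ≤ ∑ _S ∈ 𝒮, (1/(T:ℝ) - α) * n :=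
            Finset.sum_le_sum (fun S hS => key S (hSmem S hS))
        _ = (T : ℝ) * ((1/(T:ℝ) - α) * n) := by
            rw [Finset.sum_const, hScard, nsmul_eq_mul]
    have hb4 : (T : ℝ) * ((1/(T:ℝ) - α) * n) = (n : ℝ) - (T:ℝ) * α * n := by
      field_simp
    have hb1' : (Bad.card : ℝ) ≤ (j+1 : ℝ) +
        (∑ S ∈ 𝒮, (((univ : Finset V).filter (fun v => insert v S ∉ H)).card : ℝ)) := by
      push_cast
      have : ((𝒮.biUnion (fun S => (univ : Finset V).filter (fun v => insert v S ∉ H))).card : ℝ)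
          ≤ ∑ S ∈ 𝒮, (((univ : Finset V).filter (fun v => insert v S ∉ H)).card : ℝ) := by
        exact_mod_cast hb2
      have h1' : (Bad.card : ℝ) ≤ ((C₁ ∪ C₂).card : ℝ) +
          ((𝒮.biUnion (fun S => (univ : Finset V).filter (fun v => insert v S ∉ H))).card : ℝ) := by
        exact_mod_cast hb1
      rw [hU] at h1'
      push_cast at h1'
      linarith
    linarith
  -- good vertices
  have hsub : (univ : Finset V) \ Bad ⊆ (Finset.univ.filter (fun v => v ∉ C₁ ∧ v ∉ C₂ ∧
      HIsClique H k (insert v C₁) ∧ HIsClique H k (insert v C₂))) := by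
    intro v hv
    rw [Finset.mem_sdiff] at hv
    obtain ⟨-, hvB⟩ := hv
    rw [hBadDef, Finset.mem_union, Finset.mem_union] at hvB
    push_neg at hvB
    obtain ⟨⟨hv1, hv2⟩, hv3⟩ := hvB
    have hgood : ∀ S ∈ 𝒮, insert v S ∈ H := by
      intro S hS
      by_contra hcon
      exact hv3 (Finset.mem_biUnion.2 ⟨S, hS, Finset.mem_filter.2 ⟨Finset.mem_univ v, hcon⟩⟩)
    have hclique : ∀ (C : Finset V), v ∉ C → HIsClique H k C →
        (C.powersetCard (k-1) ⊆ 𝒮) → HIsClique H k (insert v C) := by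
      intro C hvC hcC hCS e he hecard
      by_cases hve : v ∈ e
      · have hS : e.erase v ⊆ C := by
          intro x hx
          rw [Finset.mem_erase] at hx
          rcases Finset.mem_insert.1 (he hx.2) with h | h
          · exact absurd h hx.1
          · exact h
        have hScard : (e.erase v).card = k - 1 := by
          rw [Finset.card_erase_of_mem hve, hecard]
        have : insert v (e.erase v) ∈ H :=
          hgood _ (hCS (Finset.mem_powersetCard.2 ⟨hS, hScard⟩))
        rwa [Finset.insert_erase hve] at this
      · apply hcC e _ hecard
        intro x hx
        rcases Finset.mem_insert.1 (he hx) with h | h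
        · exact absurd (h ▸ hx) hve
        · exact h
    refine Finset.mem_filter.2 ⟨Finset.mem_univ v, hv1, hv2, ?_, ?_⟩
    · exact hclique C₁ hv1 hc₁ (Finset.subset_union_left)
    · exact hclique C₂ hv2 hc₂ (Finset.subset_union_right)
  -- finish
  have hcard1 : ((univ : Finset V) \ Bad).card = n - Bad.card := by
    rw [Finset.card_sdiff_of_subset (Finset.subset_univ _), Finset.card_univ, hn]
  have hBadn : Bad.card ≤ n := by
    have := Finset.card_le_card (Finset.subset_univ Bad)
    rwa [Finset.card_univ, hn] at this
  have hcard1' : (((univ : Finset V) \ Bad).card : ℝ) = (n : ℝ) - (Bad.card : ℝ) := by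
    rw [hcard1]; push_cast [hBadn]; ring
  have hmain : ((n : ℝ) - (Bad.card : ℝ)) ≤
      ((Finset.univ.filter (fun v => v ∉ C₁ ∧ v ∉ C₂ ∧
        HIsClique H k (insert v C₁) ∧ HIsClique H k (insert v C₂))).card : ℝ) := by
    rw [← hcard1']
    exact_mod_cast Finset.card_le_card hsub
  have hαn : ((j+1:ℕ) : ℝ)^2 ≤ α * n := by
    rw [div_le_iff₀ hα] at hnbig
    linarith [hnbig]
  have hT2' : (2 : ℝ) ≤ (T : ℝ) := by exact_mod_cast hT2
  have hnn : (0:ℝ) ≤ α * n := by positivity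
  have hj1 : ((j:ℝ)+1) ≤ ((j:ℝ)+1)^2 := by nlinarith [Nat.cast_nonneg (α := ℝ) j]
  have hαn' : ((j:ℝ)+1) ≤ α * n := by
    push_cast at hαn
    linarith
  have hTαn : (T:ℝ) * α * n ≥ 2 * (α * n) := by nlinarith
  linarith
end

section
/- Let r ≥ k ≥ 3, let J_r be the set of r-cliques of a k-graph H on n vertices with δ(H) ≥ (1 - f_k(r) + 3α)n, and let J be the down-closure of J_r viewed as an r-complex. Then for every i with k - 1 ≤ i < r, the minimum i-degree of J satisfies δ_i(J) ≥ (1 - i/r + α)n. -/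
open Finset
open scoped Classical

lemma key_nat (k r i : ℕ) (hk : 3 ≤ k) (hkr : k ≤ r) (hik : k - 1 ≤ i) (hir : i < r) :
    r * Nat.choose i (k-1) ≤ i * (Nat.choose (r-1) (k-1) + Nat.choose (r-2) (k-2)) := by
  obtain ⟨k', rfl⟩ : ∃ k', k = k' + 3 := ⟨k - 3, by omega⟩
  obtain ⟨i', rfl⟩ : ∃ i', i = i' + k' + 2 := ⟨i - k' - 2, by omega⟩
  obtain ⟨m, rfl⟩ : ∃ m, r = i' + k' + 3 + m := ⟨r - (i' + k' + 3), by omega⟩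
  have hsimp1 : i' + k' + 3 + m - 1 = i' + k' + 2 + m := by omega
  have hsimp2 : i' + k' + 3 + m - 2 = i' + k' + 1 + m := by omega
  have hsimp3 : k' + 3 - 1 = k' + 2 := by omega
  have hsimp4 : k' + 3 - 2 = k' + 1 := by omega
  rw [hsimp1, hsimp2, hsimp3, hsimp4]
  set a := i' + k' + 2 with ha
  set X := Nat.choose (i' + k' + 1) (k'+1) with hX
  set Y := Nat.choose (i' + k' + 1 + m) (k'+1) with hY
  set Z := Nat.choose (i' + k' + 2 + m) (k'+2) with hZ
  set W := Nat.choose a (k'+2) with hW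
  have h1 : a * X = W * (k'+2) := by
    simpa using Nat.add_one_mul_choose_eq (i' + k' + 1) (k'+1)
  have h2 : (a + m) * Y = Z * (k'+2) := by
    have := Nat.add_one_mul_choose_eq (i' + k' + 1 + m) (k'+1)
    rw [show i' + k' + 1 + m + 1 = i' + k' + 2 + m from by omega] at this
    rw [show a + m = i' + k' + 2 + m from by omega]
    simpa using this
  have hmono : X ≤ Y := Nat.choose_le_choose _ (by omega)
  have goal2 : (k'+2) * ((i' + k' + 3 + m) * W) ≤ (k'+2) * (a * (Z + Y)) := by
    calc (k'+2) * ((i' + k' + 3 + m) * W) = (i' + k' + 3 + m) * (W * (k'+2)) := by ring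
    _ = (i' + k' + 3 + m) * (a * X) := by rw [h1]
    _ = a * ((i' + k' + 3 + m) * X) := by ring
    _ ≤ a * ((i' + k' + 3 + m) * Y) := by
        exact Nat.mul_le_mul_left _ (Nat.mul_le_mul_left _ hmono)
    _ = a * ((a + m) * Y + Y) := by rw [show i' + k' + 3 + m = (a + m) + 1 from by omega]; ring
    _ = a * (Z * (k'+2) + Y) := by rw [h2]
    _ ≤ a * (Z * (k'+2) + Y * (k'+2)) := by
        exact Nat.mul_le_mul_left _ (Nat.add_le_add_left (Nat.le_mul_of_pos_right _ (by omega)) _)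
    _ = (k'+2) * (a * (Z + Y)) := by ring
  exact Nat.le_of_mul_le_mul_left goal2 (by omega)

lemma clique_mono {V : Type} [DecidableEq V] {H : Finset (Finset V)} {k : ℕ} {S T : Finset V}
    (h : HIsClique H k T) (hST : S ⊆ T) : HIsClique H k S :=
  fun e he hc => h e (he.trans hST) hc

lemma deg_eq {V : Type} [Fintype V] [DecidableEq V] {H : Finset (Finset V)} {k : ℕ}
    (hk : 1 ≤ k) (hH : ∀ e ∈ H, e.card = k) (S : Finset V) (hS : S.card = k - 1) :
    (H.filter (fun e => S ⊆ e)).card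
      = (univ.filter (fun v => v ∉ S ∧ insert v S ∈ H)).card := by
  symm
  apply Finset.card_bij (fun v _ => insert v S)
  · intro v hv
    simp only [mem_filter, mem_univ, true_and] at hv ⊢
    exact ⟨hv.2, subset_insert _ _⟩
  · intro v hv w hw h
    simp only [mem_filter, mem_univ, true_and] at hv hw
    have : v ∈ insert w S := h ▸ mem_insert_self v S
    rcases mem_insert.1 this with h' | h'
    · exact h'
    · exact absurd h' hv.1
  · intro e he
    simp only [mem_filter] at he
    obtain ⟨heH, hSe⟩ := he
    have hce : e.card = k := hH e heH
    have hne : (e \ S).Nonempty := by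
      rw [← card_pos, card_sdiff_of_subset hSe]
      omega
    obtain ⟨v, hv⟩ := hne
    rw [mem_sdiff] at hv
    refine ⟨v, ?_, ?_⟩
    · simp only [mem_filter, mem_univ, true_and]
      refine ⟨hv.2, ?_⟩
      have : insert v S = e := by
        apply Finset.eq_of_subset_of_card_le
        · exact insert_subset hv.1 hSe
        · rw [card_insert_of_notMem hv.2, hS]; omega
      rw [this]; exact heH
    · apply Finset.eq_of_subset_of_card_le
      · exact insert_subset hv.1 hSe
      · rw [card_insert_of_notMem hv.2, hS]; omega

lemma ext_count {V : Type} [Fintype V] [DecidableEq V] {H : Finset (Finset V)} {k : ℕ}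
    (δ : ℝ)
    (hdeg : ∀ T : Finset V, T.card = k - 1 →
      δ ≤ ((univ.filter (fun v => v ∉ T ∧ insert v T ∈ H)).card : ℝ))
    (S : Finset V) (hS : HIsClique H k S) :
    (Fintype.card V : ℝ) - S.card
      - (Nat.choose S.card (k-1) : ℝ) * ((Fintype.card V : ℝ) - δ)
      ≤ ((univ.filter (fun v => v ∉ S ∧ HIsClique H k (insert v S))).card : ℝ) := by
  set G := univ.filter (fun v => v ∉ S ∧ HIsClique H k (insert v S)) with hG
  set Bd := univ.filter (fun v => v ∉ S ∧ ¬ HIsClique H k (insert v S)) with hBd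
  have hpart : G.card + Bd.card = Fintype.card V - S.card := by
    have h1 : (univ.filter (fun v : V => v ∉ S)).card = Fintype.card V - S.card := by
      have : (univ.filter (fun v : V => v ∉ S)) = Sᶜ := by
        ext v; simp [mem_compl]
      rw [this, card_compl]
    rw [← h1]
    have h2 : G = (univ.filter (fun v : V => v ∉ S)).filter
        (fun v => HIsClique H k (insert v S)) := by
      rw [filter_filter]
    have h3 : Bd = (univ.filter (fun v : V => v ∉ S)).filter
        (fun v => ¬ HIsClique H k (insert v S)) := by
      rw [filter_filter]
    rw [h2, h3, Finset.card_filter_add_card_filter_not]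
  have hsub : Bd ⊆ (S.powersetCard (k-1)).biUnion
      (fun T => univ.filter (fun v => v ∉ T ∧ insert v T ∉ H)) := by
    intro v hv
    simp only [hBd, mem_filter, mem_univ, true_and] at hv
    obtain ⟨hvS, hnc⟩ := hv
    rw [HIsClique] at hnc
    push_neg at hnc
    obtain ⟨e, hesub, hecard, heH⟩ := hnc
    have hve : v ∈ e := by
      by_contra hve
      exact heH (hS e (fun x hx => by
        rcases mem_insert.1 (hesub hx) with h' | h'
        · exact absurd (h' ▸ hx) hve
        · exact h') hecard)
    refine mem_biUnion.2 ⟨e.erase v, ?_, ?_⟩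
    · rw [mem_powersetCard]
      constructor
      · intro x hx
        have hxv := (mem_erase.1 hx).1
        rcases mem_insert.1 (hesub (mem_erase.1 hx).2) with h' | h'
        · exact absurd h' hxv
        · exact h'
      · rw [card_erase_of_mem hve, hecard]
    · simp only [mem_filter, mem_univ, true_and]
      refine ⟨notMem_erase _ _, ?_⟩
      rw [insert_erase hve]
      exact heH
  have hbdcard : (Bd.card : ℝ)
      ≤ (Nat.choose S.card (k-1) : ℝ) * ((Fintype.card V : ℝ) - δ) := by
    have h1 : Bd.card ≤ ∑ T ∈ S.powersetCard (k-1),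
        (univ.filter (fun v => v ∉ T ∧ insert v T ∉ H)).card :=
      le_trans (card_le_card hsub) (card_biUnion_le)
    have h2 : ∀ T ∈ S.powersetCard (k-1),
        ((univ.filter (fun v => v ∉ T ∧ insert v T ∉ H)).card : ℝ)
          ≤ (Fintype.card V : ℝ) - δ := by
      intro T hT
      rw [mem_powersetCard] at hT
      have hTd := hdeg T hT.2
      have hsplit : (univ.filter (fun v => v ∉ T ∧ insert v T ∈ H)).card
          + (univ.filter (fun v => v ∉ T ∧ insert v T ∉ H)).card
          = (univ.filter (fun v : V => v ∉ T)).card := by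
        have ha : (univ.filter (fun v => v ∉ T ∧ insert v T ∈ H))
            = (univ.filter (fun v : V => v ∉ T)).filter (fun v => insert v T ∈ H) := by
          rw [filter_filter]
        have hb : (univ.filter (fun v => v ∉ T ∧ insert v T ∉ H))
            = (univ.filter (fun v : V => v ∉ T)).filter (fun v => ¬ insert v T ∈ H) := by
          rw [filter_filter]
        rw [ha, hb, Finset.card_filter_add_card_filter_not]
      have hTcard : (univ.filter (fun v : V => v ∉ T)).card = Fintype.card V - T.card := by
        have : (univ.filter (fun v : V => v ∉ T)) = Tᶜ := by
          ext v; simp [mem_compl]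
        rw [this, card_compl]
      have hTle : T.card ≤ Fintype.card V := card_le_card (subset_univ T)
      have h := hsplit
      rw [hTcard] at h
      have hcast : ((univ.filter (fun v => v ∉ T ∧ insert v T ∈ H)).card : ℝ)
          + ((univ.filter (fun v => v ∉ T ∧ insert v T ∉ H)).card : ℝ)
          = (Fintype.card V : ℝ) - T.card := by
        rw [← Nat.cast_add, h, Nat.cast_sub hTle]
      have hT0 : (0:ℝ) ≤ (T.card : ℝ) := Nat.cast_nonneg _
      linarith
    calc (Bd.card : ℝ) ≤ ∑ T ∈ S.powersetCard (k-1),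
        ((univ.filter (fun v => v ∉ T ∧ insert v T ∉ H)).card : ℝ) := by
          exact_mod_cast Nat.cast_le.2 h1
    _ ≤ ∑ _T ∈ S.powersetCard (k-1), ((Fintype.card V : ℝ) - δ) :=
          Finset.sum_le_sum h2
    _ = (Nat.choose S.card (k-1) : ℝ) * ((Fintype.card V : ℝ) - δ) := by
          rw [Finset.sum_const, card_powersetCard, nsmul_eq_mul]
  have hSle : S.card ≤ Fintype.card V := card_le_card (subset_univ S)
  have hcast : (G.card : ℝ) + (Bd.card : ℝ) = (Fintype.card V : ℝ) - S.card := by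
    rw [← Nat.cast_add, hpart, Nat.cast_sub hSle]
  linarith

lemma extend_to_r {V : Type} [Fintype V] [DecidableEq V] {H : Finset (Finset V)} {k r : ℕ}
    (δ : ℝ)
    (hdeg : ∀ T : Finset V, T.card = k - 1 →
      δ ≤ ((univ.filter (fun v => v ∉ T ∧ insert v T ∈ H)).card : ℝ))
    (hpos : ∀ j : ℕ, j < r → (0:ℝ) < (Fintype.card V : ℝ) - j
      - (Nat.choose j (k-1) : ℝ) * ((Fintype.card V : ℝ) - δ)) :
    ∀ S : Finset V, HIsClique H k S → S.card ≤ r →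
      ∃ C : Finset V, C.card = r ∧ HIsClique H k C ∧ S ⊆ C := by
  intro S hS hcard
  obtain ⟨d, hd⟩ : ∃ d, r - S.card = d := ⟨_, rfl⟩
  induction d generalizing S with
  | zero => exact ⟨S, by omega, hS, subset_refl S⟩
  | succ d ih =>
    have hlt : S.card < r := by omega
    have hcnt := ext_count δ hdeg S hS
    have hp := hpos S.card hlt
    have hne : (univ.filter (fun v => v ∉ S ∧ HIsClique H k (insert v S))).Nonempty := by
      rw [← card_pos]
      have : (0:ℝ) < ((univ.filter (fun v => v ∉ S ∧ HIsClique H k (insert v S))).card : ℝ) :=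
        lt_of_lt_of_le hp hcnt
      exact_mod_cast this
    obtain ⟨v, hv⟩ := hne
    simp only [mem_filter, mem_univ, true_and] at hv
    obtain ⟨hvS, hvc⟩ := hv
    have hcard' : (insert v S).card = S.card + 1 := card_insert_of_notMem hvS
    obtain ⟨C, hC1, hC2, hC3⟩ := ih (insert v S) hvc (by omega) (by omega)
    exact ⟨C, hC1, hC2, (subset_insert v S).trans hC3⟩

/-- Let `r ≥ k ≥ 3`, let `J_r` be the set of `r`-cliques of a `k`-graph `H` on `n`
vertices with `δ(H) ≥ (1 - f_k(r) + 3α)n`, and let `J` be the down-closure of `J_r`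
viewed as an `r`-complex.  Then for every `i` with `k - 1 ≤ i < r` and `n`
sufficiently large, the minimum `i`-degree of `J` satisfies
`δ_i(J) ≥ (1 - i/r + α)n`. -/
theorem stmt_10 (k r : ℕ) (α : ℝ) (hk : 3 ≤ k) (hkr : k ≤ r) (hα : 0 < α) :
    ∃ n₀ : ℕ, ∀ (V : Type) (_ : Fintype V) (_ : DecidableEq V) (n : ℕ),
      Fintype.card V = n → n₀ ≤ n →
      ∀ H : Finset (Finset V), (∀ e ∈ H, e.card = k) →
      (∀ S : Finset V, S.card = k - 1 →
        (1 - 1 / ((Nat.choose (r - 1) (k - 1) : ℝ) + (Nat.choose (r - 2) (k - 2) : ℝ))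
          + 3 * α) * n ≤ ((H.filter (fun e => S ⊆ e)).card : ℝ)) →
      ∀ i : ℕ, k - 1 ≤ i → i < r →
      ∀ e : Finset V, e.card = i →
        (∃ C : Finset V, C.card = r ∧ HIsClique H k C ∧ e ⊆ C) →
        (1 - (i : ℝ) / (r : ℝ) + α) * n ≤
          ((Finset.univ.filter (fun v => v ∉ e ∧
            ∃ C : Finset V, C.card = r ∧ HIsClique H k C ∧ insert v e ⊆ C)).card : ℝ) := by
  refine ⟨Nat.ceil ((r : ℝ) / α) + r + k + 1, ?_⟩
  intro V _ _ n hcard hn H hH hdeg i hik hir e he hex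
  subst hcard
  set N : ℝ := (Fintype.card V : ℝ) with hN
  set A : ℕ := Nat.choose (r - 1) (k - 1) with hA
  set B : ℕ := Nat.choose (r - 2) (k - 2) with hB
  have hA1 : 1 ≤ A := Nat.choose_pos (by omega)
  have hB1 : 1 ≤ B := Nat.choose_pos (by omega)
  have hAB : (0:ℝ) < (A:ℝ) + (B:ℝ) := by
    have : (1:ℝ) ≤ (A:ℝ) := by exact_mod_cast hA1
    have : (1:ℝ) ≤ (B:ℝ) := by exact_mod_cast hB1
    positivity
  set f : ℝ := 1 / ((A:ℝ) + (B:ℝ)) with hf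
  set δ : ℝ := (1 - f + 3 * α) * N with hδ
  have hr0 : (0:ℝ) < (r:ℝ) := by
    have : 0 < r := by omega
    exact_mod_cast this
  -- basic size facts
  have hnr : r ≤ Fintype.card V := by omega
  have hNr : (r:ℝ) ≤ N := by rw [hN]; exact_mod_cast hnr
  have hN0 : (0:ℝ) ≤ N := Nat.cast_nonneg _
  have hαN : (r:ℝ) ≤ α * N := by
    have h1 : (Nat.ceil ((r : ℝ) / α) : ℝ) ≤ N := by
      have h0 : (Nat.ceil ((r : ℝ) / α) : ℕ) ≤ Fintype.card V := by omega
      rw [hN]; exact_mod_cast h0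
    have h2 : (r : ℝ) / α ≤ N := le_trans (Nat.le_ceil _) h1
    calc (r:ℝ) = ((r:ℝ) / α) * α := by field_simp
    _ ≤ N * α := mul_le_mul_of_nonneg_right h2 (le_of_lt hα)
    _ = α * N := by ring
  have hα0 : (0:ℝ) ≤ α * N := le_trans (by exact_mod_cast Nat.zero_le r) hαN
  -- degree hypothesis in vertex form
  have hdeg' : ∀ T : Finset V, T.card = k - 1 →
      δ ≤ ((univ.filter (fun v => v ∉ T ∧ insert v T ∈ H)).card : ℝ) := by
    intro T hT
    have := hdeg T hT
    rw [deg_eq (by omega) hH T hT] at this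
    exact this
  -- N - δ
  have hNδ : N - δ = (f - 3 * α) * N := by rw [hδ]; ring
  -- key combinatorial inequality, real form
  have keyR : ∀ j : ℕ, k - 1 ≤ j → j < r →
      (Nat.choose j (k-1) : ℝ) * f ≤ (j:ℝ) / (r:ℝ) := by
    intro j hjk hjr
    have hkey := key_nat k r j hk hkr hjk hjr
    have hkeyR : (r:ℝ) * (Nat.choose j (k-1) : ℝ) ≤ (j:ℝ) * ((A:ℝ) + (B:ℝ)) := by
      exact_mod_cast hkey
    rw [hf, mul_one_div, div_le_div_iff₀ hAB hr0]
    linarith [hkeyR]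
  -- positivity needed for extension
  have hpos : ∀ j : ℕ, j < r → (0:ℝ) < N - j
      - (Nat.choose j (k-1) : ℝ) * (N - δ) := by
    intro j hjr
    have hjN : (j:ℝ) < (r:ℝ) := by exact_mod_cast hjr
    by_cases hjk : j < k - 1
    · rw [Nat.choose_eq_zero_of_lt hjk]
      simp only [Nat.cast_zero, zero_mul, sub_zero]
      linarith
    · push_neg at hjk
      have hC1 : (1:ℝ) ≤ (Nat.choose j (k-1) : ℝ) := by
        exact_mod_cast Nat.choose_pos hjk
      have hCf := keyR j hjk hjr
      have h1 : (Nat.choose j (k-1) : ℝ) * f * N ≤ ((j:ℝ)/(r:ℝ)) * N :=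
        mul_le_mul_of_nonneg_right hCf hN0
      have h2 : ((j:ℝ)/(r:ℝ)) * N ≤ N := by
        have : (j:ℝ)/(r:ℝ) ≤ 1 := by
          rw [div_le_one hr0]; linarith
        nlinarith
      have h3 : 3 * α * N ≤ 3 * α * ((Nat.choose j (k-1) : ℝ) * N) := by
        nlinarith
      have hrw : (Nat.choose j (k-1) : ℝ) * (N - δ)
          = (Nat.choose j (k-1) : ℝ) * f * N - 3 * α * ((Nat.choose j (k-1) : ℝ) * N) := by
        rw [hNδ]; ring
      rw [hrw]
      linarith
  -- e is a clique
  obtain ⟨C₀, hC₀r, hC₀cl, heC₀⟩ := hex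
  have hecl : HIsClique H k e := clique_mono hC₀cl heC₀
  -- extension count for e
  have hcnt := ext_count δ hdeg' e hecl
  rw [he] at hcnt
  -- good set is inside target set
  have hsub : (univ.filter (fun v => v ∉ e ∧ HIsClique H k (insert v e)))
      ⊆ (univ.filter (fun v => v ∉ e ∧
        ∃ C : Finset V, C.card = r ∧ HIsClique H k C ∧ insert v e ⊆ C)) := by
    intro v hv
    simp only [mem_filter, mem_univ, true_and] at hv ⊢
    obtain ⟨hve, hvc⟩ := hv
    refine ⟨hve, ?_⟩
    have hcard' : (insert v e).card = i + 1 := by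
      rw [card_insert_of_notMem hve, he]
    obtain ⟨C, hC1, hC2, hC3⟩ := extend_to_r δ hdeg' hpos (insert v e) hvc (by omega)
    exact ⟨C, hC1, hC2, hC3⟩
  have hcards : ((univ.filter (fun v => v ∉ e ∧ HIsClique H k (insert v e))).card : ℝ)
      ≤ ((univ.filter (fun v => v ∉ e ∧
        ∃ C : Finset V, C.card = r ∧ HIsClique H k C ∧ insert v e ⊆ C)).card : ℝ) := by
    exact_mod_cast card_le_card hsub
  -- final arithmetic
  have hC1 : (1:ℝ) ≤ (Nat.choose i (k-1) : ℝ) := by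
    exact_mod_cast Nat.choose_pos hik
  have hCf := keyR i hik hir
  have h1 : (Nat.choose i (k-1) : ℝ) * f * N ≤ ((i:ℝ)/(r:ℝ)) * N :=
    mul_le_mul_of_nonneg_right hCf hN0
  have h3 : 3 * (α * N) ≤ 3 * α * ((Nat.choose i (k-1) : ℝ) * N) := by
    nlinarith
  have hiR : (i:ℝ) ≤ (r:ℝ) := by exact_mod_cast le_of_lt hir
  have hrw : (Nat.choose i (k-1) : ℝ) * (N - δ)
      = (Nat.choose i (k-1) : ℝ) * f * N - 3 * α * ((Nat.choose i (k-1) : ℝ) * N) := by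
    rw [hNδ]; ring
  rw [hrw] at hcnt
  have hfinal : (1 - (i:ℝ)/(r:ℝ) + α) * N
      ≤ N - (i:ℝ) - ((Nat.choose i (k-1) : ℝ) * f * N
        - 3 * α * ((Nat.choose i (k-1) : ℝ) * N)) := by
    have hexp : (1 - (i:ℝ)/(r:ℝ) + α) * N = N - ((i:ℝ)/(r:ℝ)) * N + α * N := by ring
    rw [hexp]
    have : (i:ℝ) ≤ α * N := le_trans hiR hαN
    linarith
  linarith
end
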